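/- arXiv:1406.2902 — 3 statements merged into one kernel-verified Lean document; each statement's English description precedes it below -/
import Mathlib

section
/- Let l be an even integer with l > 4 and let ε : ℝ^× → {±1} be either the trivial character or the sign character. For b ∈ ℝ∖{0,−1} define W_+(b) = i^{l/2}·(1+b)^{−l/2}·∫₀^∞ (t+i)^{−l/2}·(t + bi/(b+1))^{−l/2}·t^{l/2−1}·log t dt and W^ε(b) = W_+(b) + ε(−1)·conj(W_+(b)). Then for every δ > 0 there is a constant C (depending only on δ and l) such that |b(b+1)|^δ · |W^ε(b)| ≤ C·(1+|b|)^{−l/2+2δ} for all b ∈ ℝ∖{0,−1}. -/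
/-!
Write `k = l/2` and `a = b/(b+1)`, so that `W₊(b) = i^k (1+b)^{-k} I(a)` with
`I(a) = ∫₀^∞ (t+i)^{-k} (t+ai)^{-k} t^{k-1} log t dt`. Since `|t+ai| ≥ max(|a|, t)`, for every
`0 < γ < k` the integrand is `|a|^{-γ}` times a function of `t` that is integrable uniformly in
`a`, so `|I(a)| ≪ |a|^{-γ}`. Using `γ ≤ δ` when `|a| ≤ 1` and `k - γ` when `|a| ≥ 1` gives
`|W₊(b)| ≪ m^{-γ} n^{γ-k}`, where `m ≤ n` are `|b|` and `|b+1|` in order. Multiplying by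
`|b(b+1)|^δ = (mn)^δ` leaves at most `n^{2δ-k}`, and `n ≍ 1 + |b|`.
-/

open Complex MeasureTheory

namespace Stmt17

/-- `W₊(b) = i^{l/2}(1+b)^{−l/2} ∫₀^∞ (t+i)^{−l/2}(t+bi/(b+1))^{−l/2} t^{l/2−1} log t dt`. -/
noncomputable def Wplus (l : ℤ) (b : ℝ) : ℂ :=
  I ^ (l / 2) * ((1 : ℂ) + (b : ℂ)) ^ (-(l / 2)) *
    ∫ t in Set.Ioi (0 : ℝ),
      ((t : ℂ) + I) ^ (-(l / 2)) * ((t : ℂ) + (b : ℂ) * I / ((b : ℂ) + 1)) ^ (-(l / 2)) *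
        (t : ℂ) ^ (l / 2 - 1) * (Real.log t : ℂ)

open Real Set ComplexConjugate

noncomputable def logIntegrand (k : ℤ) (a t : ℝ) : ℂ :=
  ((t : ℂ) + I) ^ (-k) * ((t : ℂ) + a * I) ^ (-k) * (t : ℂ) ^ (k - 1) * (Real.log t : ℂ)

lemma norm_logIntegrand (k : ℤ) (a : ℝ) {t : ℝ} (ht : 0 < t) :
    ‖logIntegrand k a t‖ =
      ‖(t : ℂ) + I‖ ^ (-(k : ℝ)) * ‖(t : ℂ) + a * I‖ ^ (-(k : ℝ)) * t ^ ((k : ℝ) - 1) *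
        |Real.log t| := by
  rw [logIntegrand, norm_mul, norm_mul, norm_mul, norm_zpow, norm_zpow, norm_zpow, norm_real,
    norm_real, Real.norm_eq_abs, Real.norm_eq_abs, abs_of_pos ht, ← rpow_intCast,
    ← rpow_intCast, ← rpow_intCast]
  push_cast
  rfl

lemma norm_rpow_neg_le {z : ℂ} (hre : z.re ≠ 0) (him : z.im ≠ 0) {γ M : ℝ} (hγ : 0 ≤ γ)
    (hγM : γ ≤ M) : ‖z‖ ^ (-M) ≤ |z.im| ^ (-γ) * |z.re| ^ (γ - M) := by
  have hz : 0 < ‖z‖ := (abs_pos.2 hre).trans_le (abs_re_le_norm z)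
  calc ‖z‖ ^ (-M) = ‖z‖ ^ (-γ) * ‖z‖ ^ (γ - M) := by rw [← rpow_add hz]; ring_nf
    _ ≤ |z.im| ^ (-γ) * |z.re| ^ (γ - M) :=
      mul_le_mul (rpow_le_rpow_of_nonpos (abs_pos.2 him) (abs_im_le_norm z) (by linarith))
        (rpow_le_rpow_of_nonpos (abs_pos.2 hre) (abs_re_le_norm z) (by linarith))
        (by positivity) (by positivity)

lemma abs_log_le_rpow_neg_div {t ε : ℝ} (ht : 0 < t) (ht1 : t ≤ 1) (hε : 0 < ε) :
    |Real.log t| ≤ t ^ (-ε) / ε := by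
  rw [abs_of_nonpos (log_nonpos ht.le ht1), ← Real.log_inv, rpow_neg ht.le, ← inv_rpow ht.le]
  exact log_le_rpow_div (by positivity) hε

-- Bounding `|log t|` by `t^{-γ/2}` near `0` and by `t^{(M-γ)/2}` near `∞` costs only half of the
-- room `γ` resp. `M - γ` that the power factors leave for integrability.
noncomputable def logMajorant (M γ t : ℝ) : ℝ :=
  if t ≤ 1 then 2 / γ * t ^ (γ / 2 - 1) else 2 / (M - γ) * t ^ (-(M - γ) / 2 - 1)

lemma norm_logIntegrand_le {k : ℤ} {γ : ℝ} (hγ : 0 < γ) (hγk : γ < k) {a t : ℝ} (ha : a ≠ 0)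
    (ht : 0 < t) : ‖logIntegrand k a t‖ ≤ |a| ^ (-γ) * logMajorant k γ t := by
  have hB : ‖(t : ℂ) + a * I‖ ^ (-(k : ℝ)) ≤ |a| ^ (-γ) * t ^ (γ - k) := by
    simpa [abs_of_pos ht] using
      norm_rpow_neg_le (z := t + a * I) (by simpa using ht.ne') (by simpa using ha) hγ.le hγk.le
  rw [norm_logIntegrand k a ht, logMajorant]
  split_ifs with ht1
  · have hA : ‖(t : ℂ) + I‖ ^ (-(k : ℝ)) ≤ 1 := by
      simpa using norm_rpow_neg_le (z := t + I) (by simpa using ht.ne') (by simp)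
        (γ := k) (by linarith) le_rfl
    calc _ ≤ 1 * (|a| ^ (-γ) * t ^ (γ - k)) * t ^ ((k : ℝ) - 1) * (t ^ (-(γ / 2)) / (γ / 2)) := by
          gcongr
          exact abs_log_le_rpow_neg_div ht ht1 (by positivity)
      _ = |a| ^ (-γ) * (2 / γ * (t ^ (γ - k) * t ^ ((k : ℝ) - 1) * t ^ (-(γ / 2)))) := by
          field_simp
      _ = |a| ^ (-γ) * (2 / γ * t ^ (γ / 2 - 1)) := by
          rw [← rpow_add ht, ← rpow_add ht]; ring_nf
  · have hA : ‖(t : ℂ) + I‖ ^ (-(k : ℝ)) ≤ t ^ (-(k : ℝ)) := by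
      simpa [abs_of_pos ht] using norm_rpow_neg_le (z := t + I) (by simpa using ht.ne') (by simp)
        (γ := 0) le_rfl (by linarith)
    have hlog : |Real.log t| ≤ t ^ ((k - γ) / 2) / ((k - γ) / 2) := by
      rw [abs_of_nonneg (log_nonneg (by linarith))]
      exact log_le_rpow_div ht.le (by linarith)
    calc _ ≤ t ^ (-(k : ℝ)) * (|a| ^ (-γ) * t ^ (γ - k)) * t ^ ((k : ℝ) - 1) *
          (t ^ ((k - γ) / 2) / ((k - γ) / 2)) := by gcongr
      _ = |a| ^ (-γ) * (2 / (k - γ) *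
            (t ^ (-(k : ℝ)) * t ^ (γ - k) * t ^ ((k : ℝ) - 1) * t ^ ((k - γ) / 2))) := by
          field_simp
      _ = |a| ^ (-γ) * (2 / (k - γ) * t ^ (-(k - γ) / 2 - 1)) := by
          rw [← rpow_add ht, ← rpow_add ht, ← rpow_add ht]; ring_nf

lemma logMajorant_nonneg {M γ t : ℝ} (hγ : 0 < γ) (hγM : γ < M) (ht : 0 < t) :
    0 ≤ logMajorant M γ t := by
  have : 0 < M - γ := by linarith
  unfold logMajorant
  split_ifs <;> positivity

lemma integrableOn_logMajorant {M γ : ℝ} (hγ : 0 < γ) (hγM : γ < M) :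
    IntegrableOn (logMajorant M γ) (Ioi 0) := by
  rw [← Ioc_union_Ioi_eq_Ioi zero_le_one]
  refine IntegrableOn.union ?_ ?_
  · have h := ((intervalIntegral.intervalIntegrable_rpow' (a := 0) (b := 1)
      (r := γ / 2 - 1) (by linarith)).const_mul (2 / γ))
    rw [intervalIntegrable_iff_integrableOn_Ioc_of_le zero_le_one] at h
    exact h.congr_fun (fun t ht => by rw [logMajorant, if_pos ht.2]) measurableSet_Ioc
  · refine IntegrableOn.congr_fun ((integrableOn_Ioi_rpow_of_lt
      (a := -(M - γ) / 2 - 1) (by linarith) zero_lt_one).const_mul (2 / (M - γ)))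
      (fun t ht => by rw [logMajorant, if_neg (not_le.2 ht)]) measurableSet_Ioi

lemma norm_integral_logIntegrand_le {k : ℤ} {γ : ℝ} (hγ : 0 < γ) (hγk : γ < k) :
    ∃ J, 0 ≤ J ∧ ∀ a : ℝ, a ≠ 0 →
      ‖∫ t in Ioi (0 : ℝ), logIntegrand k a t‖ ≤ J * |a| ^ (-γ) := by
  refine ⟨∫ t in Ioi (0 : ℝ), logMajorant k γ t,
    setIntegral_nonneg measurableSet_Ioi fun t ht => logMajorant_nonneg hγ hγk ht,
    fun a ha => ?_⟩
  calc ‖∫ t in Ioi (0 : ℝ), logIntegrand k a t‖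
      ≤ ∫ t in Ioi (0 : ℝ), |a| ^ (-γ) * logMajorant k γ t :=
        norm_integral_le_of_norm_le ((integrableOn_logMajorant hγ hγk).const_mul _)
          ((ae_restrict_iff' measurableSet_Ioi).2 (.of_forall fun t ht =>
            norm_logIntegrand_le hγ hγk ha ht))
    _ = (∫ t in Ioi (0 : ℝ), logMajorant k γ t) * |a| ^ (-γ) := by
        rw [integral_const_mul, mul_comm]

lemma Wplus_eq (l : ℤ) (b : ℝ) :
    Wplus l b = I ^ (l / 2) * ((b + 1 : ℝ) : ℂ) ^ (-(l / 2)) *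
      ∫ t in Ioi (0 : ℝ), logIntegrand (l / 2) (b / (b + 1)) t := by
  simp only [Wplus, logIntegrand]
  push_cast
  simp only [add_comm (1 : ℂ), div_mul_eq_mul_div]

lemma norm_Wplus (l : ℤ) (b : ℝ) :
    ‖Wplus l b‖ = |b + 1| ^ (-((l / 2 : ℤ) : ℝ)) *
      ‖∫ t in Ioi (0 : ℝ), logIntegrand (l / 2) (b / (b + 1)) t‖ := by
  rw [Wplus_eq, norm_mul, norm_mul, norm_zpow, norm_I, one_zpow, one_mul, norm_zpow, norm_real,
    Real.norm_eq_abs, ← rpow_intCast]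
  push_cast
  rfl

lemma rpow_neg_mul_div_rpow_neg {x y : ℝ} (hx : 0 < x) (hy : 0 < y) (γ M : ℝ) :
    y ^ (-M) * (x / y) ^ (-γ) = x ^ (-γ) * y ^ (γ - M) := by
  rw [div_rpow hx.le hy.le, rpow_neg hy.le γ, div_inv_eq_mul, ← mul_assoc, mul_comm (y ^ (-M)),
    mul_assoc, ← rpow_add hy]
  ring_nf

lemma norm_Wplus_le {l : ℤ} {γ : ℝ} (hγ : 0 < γ) (hγk : γ < (l / 2 : ℤ)) :
    ∃ J, 0 ≤ J ∧ ∀ b : ℝ, b ≠ 0 → b ≠ -1 →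
      ‖Wplus l b‖ ≤ J * (min |b| |b + 1| ^ (-γ) * max |b| |b + 1| ^ (γ - (l / 2 : ℤ))) := by
  set k : ℤ := l / 2
  obtain ⟨J₁, hJ₁, hI₁⟩ := norm_integral_logIntegrand_le hγ hγk
  obtain ⟨J₂, hJ₂, hI₂⟩ := norm_integral_logIntegrand_le (γ := k - γ) (by linarith) (by linarith)
  refine ⟨max J₁ J₂, le_max_of_le_left hJ₁, fun b hb0 hb1 => ?_⟩
  have hx : 0 < |b| := abs_pos.2 hb0
  have hy : 0 < |b + 1| := abs_pos.2 fun h => hb1 (by linarith)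
  have ha : b / (b + 1) ≠ 0 := div_ne_zero hb0 (abs_pos.1 hy)
  rw [norm_Wplus]
  rcases le_total |b| |b + 1| with hxy | hyx
  · calc _ ≤ |b + 1| ^ (-(k : ℝ)) * (J₁ * (|b| / |b + 1|) ^ (-γ)) := by
          gcongr; simpa [abs_div] using hI₁ _ ha
      _ = J₁ * (|b| ^ (-γ) * |b + 1| ^ (γ - k)) := by
          rw [mul_left_comm, rpow_neg_mul_div_rpow_neg hx hy]
      _ ≤ _ := by
          rw [min_eq_left hxy, max_eq_right hxy]
          gcongr; exact le_max_left _ _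
  · calc _ ≤ |b + 1| ^ (-(k : ℝ)) * (J₂ * (|b| / |b + 1|) ^ (-(k - γ))) := by
          gcongr; simpa [abs_div] using hI₂ _ ha
      _ = J₂ * (|b + 1| ^ (-γ) * |b| ^ (γ - k)) := by
          rw [mul_left_comm, rpow_neg_mul_div_rpow_neg hx hy, mul_comm]
          ring_nf
      _ ≤ _ := by
          rw [min_eq_right hyx, max_eq_left hyx]
          gcongr; exact le_max_right _ _

lemma norm_add_mul_conj_le (z w : ℂ) : ‖z + w * conj z‖ ≤ (1 + ‖w‖) * ‖z‖ := by
  calc ‖z + w * conj z‖ ≤ ‖z‖ + ‖w‖ * ‖z‖ := by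
        simpa only [norm_mul, Complex.norm_conj] using norm_add_le z (w * conj z)
    _ = (1 + ‖w‖) * ‖z‖ := by ring

lemma mul_rpow_mul_rpow_le {x y : ℝ} (hx : 0 < x) (hxy : x ≤ y) {γ δ M : ℝ} (hγδ : γ ≤ δ) :
    (x * y) ^ δ * (x ^ (-γ) * y ^ (γ - M)) ≤ y ^ (2 * δ - M) := by
  have hy : 0 < y := hx.trans_le hxy
  calc (x * y) ^ δ * (x ^ (-γ) * y ^ (γ - M)) = x ^ (δ - γ) * y ^ (δ + γ - M) := by
        rw [mul_rpow hx.le hy.le, sub_eq_add_neg δ γ, rpow_add hx, add_sub_assoc, rpow_add hy]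
        ring
    _ ≤ y ^ (δ - γ) * y ^ (δ + γ - M) := by gcongr
    _ = y ^ (2 * δ - M) := by rw [← rpow_add hy]; ring_nf

lemma rpow_le_rpow_mul_abs {x y c : ℝ} (hx : 0 < x) (hxy : x ≤ y) (hyx : y ≤ c * x) (s : ℝ) :
    x ^ s ≤ c ^ |s| * y ^ s := by
  have hy : 0 < y := hx.trans_le hxy
  have hxy' : 0 < x / y := div_pos hx hy
  calc x ^ s = (x / y) ^ s * y ^ s := by rw [div_rpow hx.le hy.le, div_mul_cancel₀ _ (by positivity)]
    _ ≤ (x / y) ^ (-|s|) * y ^ s := by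
        gcongr ?_ * _
        exact rpow_le_rpow_of_exponent_ge hxy' (div_le_one_of_le₀ hxy hy.le) (neg_abs_le s)
    _ = (y / x) ^ |s| * y ^ s := by rw [rpow_neg hxy'.le, ← inv_rpow hxy'.le, inv_div]
    _ ≤ c ^ |s| * y ^ s := by gcongr; rwa [div_le_iff₀ hx]

lemma max_abs_le_one_add_abs (b : ℝ) :
    max |b| |b + 1| ≤ 1 + |b| ∧ 1 + |b| ≤ 3 * max |b| |b + 1| := by
  have h₁ : |b + 1| ≤ |b| + 1 := by simpa using abs_add_le b 1
  have h₂ : 1 ≤ |b + 1| + |b| := by simpa using abs_sub (b + 1) b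
  exact ⟨max_le (by linarith) (by linarith),
    by linarith [le_max_left |b| |b + 1|, le_max_right |b| |b + 1|]⟩

theorem statement17 (l : ℤ) (hleven : Even l) (hl : 4 < l)
    (e : ℝ) (he : e = 1 ∨ e = -1)  -- `e = ε(−1)`, `ε` trivial or the sign character
    (δ : ℝ) (hδ : 0 < δ) :
    ∃ C : ℝ, ∀ b : ℝ, b ≠ 0 → b ≠ -1 →
      |b * (b + 1)| ^ δ *
          ‖Wplus l b + (e : ℂ) * (starRingEnd ℂ) (Wplus l b)‖ ≤
        C * (1 + |b|) ^ (-(l : ℝ) / 2 + 2 * δ) := by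
  obtain ⟨k, rfl⟩ := hleven
  have hk : (k + k) / 2 = k := by omega
  have hγ : 0 < min δ 1 := lt_min hδ one_pos
  obtain ⟨J, hJ, hW⟩ := norm_Wplus_le (l := k + k) hγ (by
    rw [hk]; exact (min_le_right δ 1).trans_lt (by exact_mod_cast (by omega : 1 < k)))
  rw [hk] at hW
  refine ⟨2 * J * 3 ^ |2 * δ - k|, fun b hb0 hb1 => ?_⟩
  have he1 : ‖(e : ℂ)‖ = 1 := by rcases he with rfl | rfl <;> simp
  obtain ⟨hn, hn'⟩ := max_abs_le_one_add_abs b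
  set m := min |b| |b + 1|
  set n := max |b| |b + 1|
  have hm : 0 < m := lt_min (abs_pos.2 hb0) (abs_pos.2 fun h => hb1 (by linarith))
  calc _ ≤ (m * n) ^ δ * ((1 + ‖(e : ℂ)‖) * (J * (m ^ (-min δ 1) * n ^ (min δ 1 - k)))) := by
        rw [abs_mul, ← min_mul_max |b| |b + 1|]
        gcongr _ * ?_
        exact (norm_add_mul_conj_le _ _).trans (by gcongr _ * ?_; exact hW b hb0 hb1)
    _ = 2 * J * ((m * n) ^ δ * (m ^ (-min δ 1) * n ^ (min δ 1 - k))) := by rw [he1]; ring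
    _ ≤ 2 * J * (3 ^ |2 * δ - k| * (1 + |b|) ^ (2 * δ - k)) := by
        gcongr 2 * J * ?_
        exact (mul_rpow_mul_rpow_le hm min_le_max (min_le_left δ 1)).trans
          (rpow_le_rpow_mul_abs (hm.trans_le min_le_max) hn hn' _)
    _ = _ := by push_cast; ring_nf

end Stmt17
end

section
/- Let l be an even integer with l > 4. For b ∈ ℝ∖{0,−1} define W_+(b) = i^{l/2}·(1+b)^{−l/2}·∫₀^∞ (t+i)^{−l/2}·(t + bi/(b+1))^{−l/2}·t^{l/2−1}·log t dt. Then for all b ∈ ℝ∖{0,−1}: |W_+(b)| ≤ |2b(b+1)|^{−l/4} · ∫₀^∞ t^{l/4}·(t²+1)^{−l/4}·|log t| dt/t, and the latter integral is finite. -/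
/-!
With `r = l/4`, absorb `(1+b)^{-l/2}` into the second factor: the integrand of `W₊(b)` then has
norm `(t²+1)^{-r} ((1+b)²t² + b²)^{-r} t^{2r-1} |log t|`. By AM-GM, `(1+b)²t² + b² ≥ 2|b(b+1)| t`,
so this norm is at most `|2b(b+1)|^{-r} t^r (t²+1)^{-r} |log t| / t`. The latter majorant is
integrable on `(0,∞)` since `|log t| ≤ 2(t^{1/2} + t^{-1/2})` and `t^c (t²+1)^{-r}` is integrable
there whenever `-1 < c < 2r - 1`.
-/

open Complex MeasureTheory

namespace Stmt18

noncomputable def Wplus (l : ℤ) (b : ℝ) : ℂ :=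
  I ^ (l / 2) * ((1 : ℂ) + (b : ℂ)) ^ (-(l / 2)) *
    ∫ t in Set.Ioi (0 : ℝ),
      ((t : ℂ) + I) ^ (-(l / 2)) * ((t : ℂ) + (b : ℂ) * I / ((b : ℂ) + 1)) ^ (-(l / 2)) *
        (t : ℂ) ^ (l / 2 - 1) * (Real.log t : ℂ)

lemma abs_log_le_two_mul_rpow_add {t : ℝ} (ht : 0 < t) :
    |Real.log t| ≤ 2 * (t ^ (1 / 2 : ℝ) + t ^ (-(1 / 2) : ℝ)) := by
  have h₁ : 0 ≤ t ^ (1 / 2 : ℝ) := Real.rpow_nonneg ht.le _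
  have h₂ : 0 ≤ t ^ (-(1 / 2) : ℝ) := Real.rpow_nonneg ht.le _
  rcases le_or_gt 1 t with h | h
  · rw [abs_of_nonneg (Real.log_nonneg h)]
    nlinarith [Real.log_le_rpow_div ht.le (show (0 : ℝ) < 1 / 2 by norm_num)]
  · rw [abs_of_nonpos (Real.log_nonpos ht.le h.le), ← Real.log_inv]
    have := Real.log_le_rpow_div (inv_nonneg.2 ht.le) (show (0 : ℝ) < 1 / 2 by norm_num)
    rw [Real.inv_rpow ht.le, ← Real.rpow_neg ht.le] at this
    nlinarith

lemma integrableOn_Ioi_rpow_mul_sq_add_one_rpow_neg {r c : ℝ} (hc : -1 < c)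
    (hcr : c - 2 * r < -1) :
    IntegrableOn (fun t : ℝ => t ^ c * (t ^ 2 + 1) ^ (-r)) (Set.Ioi 0) := by
  have hr : 0 ≤ r := by linarith
  have hcont : ContinuousOn (fun t : ℝ => t ^ c * (t ^ 2 + 1) ^ (-r)) (Set.Ioi 0) :=
    (continuousOn_id.rpow_const fun x hx => Or.inl hx.ne').mul
      ((by fun_prop : Continuous fun t : ℝ => t ^ 2 + 1).continuousOn.rpow_const
        fun x _ => Or.inl (by positivity))
  rw [← Set.Ioc_union_Ioi_eq_Ioi zero_le_one]
  refine IntegrableOn.union ?_ ?_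
  · have hpow : IntegrableOn (fun t : ℝ => t ^ c) (Set.Ioc 0 1) :=
      (intervalIntegrable_iff_integrableOn_Ioc_of_le zero_le_one).1
        (intervalIntegral.intervalIntegrable_rpow' hc)
    refine hpow.mono' ((hcont.mono Set.Ioc_subset_Ioi_self).aestronglyMeasurable
      measurableSet_Ioc) ?_
    filter_upwards [ae_restrict_mem measurableSet_Ioc] with t ht
    replace ht : 0 < t := ht.1
    rw [Real.norm_eq_abs, abs_of_nonneg (by positivity)]
    have : (t ^ 2 + 1) ^ (-r) ≤ 1 :=
      Real.rpow_le_one_of_one_le_of_nonpos (by nlinarith) (by linarith)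
    nlinarith [Real.rpow_nonneg ht.le c]
  · refine (integrableOn_Ioi_rpow_of_lt hcr one_pos).mono'
      ((hcont.mono (Set.Ioi_subset_Ioi zero_le_one)).aestronglyMeasurable measurableSet_Ioi) ?_
    filter_upwards [ae_restrict_mem measurableSet_Ioi] with t ht
    have ht₀ : 0 < t := one_pos.trans ht
    rw [Real.norm_eq_abs, abs_of_nonneg (by positivity)]
    calc t ^ c * (t ^ 2 + 1) ^ (-r) ≤ t ^ c * (t ^ 2) ^ (-r) := by
          refine mul_le_mul_of_nonneg_left ?_ (Real.rpow_nonneg ht₀.le c)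
          exact Real.rpow_le_rpow_of_nonpos (by positivity) (by linarith) (by linarith)
      _ = t ^ (c - 2 * r) := by
          rw [← Real.rpow_natCast, ← Real.rpow_mul ht₀.le, ← Real.rpow_add ht₀]
          ring_nf

lemma integrableOn_Ioi_rpow_mul_sq_add_one_rpow_neg_mul_abs_log_div {r : ℝ} (hr : 1 / 2 < r) :
    IntegrableOn (fun t : ℝ => t ^ r * (t ^ 2 + 1) ^ (-r) * |Real.log t| / t) (Set.Ioi 0) := by
  have hcont : ContinuousOn (fun t : ℝ => t ^ r * (t ^ 2 + 1) ^ (-r) * |Real.log t| / t)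
      (Set.Ioi 0) := by
    refine ContinuousOn.div ?_ continuousOn_id fun x hx => hx.ne'
    refine ((continuousOn_id.rpow_const fun x hx => Or.inl hx.ne').mul
      ((by fun_prop : Continuous fun t : ℝ => t ^ 2 + 1).continuousOn.rpow_const
        fun x _ => Or.inl (by positivity))).mul ?_
    exact (Real.continuousOn_log.mono fun x hx => ne_of_gt hx).abs
  have hmajorant := ((integrableOn_Ioi_rpow_mul_sq_add_one_rpow_neg (r := r) (c := r - 1 / 2)
    (by linarith) (by linarith)).const_mul 2).add
      ((integrableOn_Ioi_rpow_mul_sq_add_one_rpow_neg (r := r) (c := r - 3 / 2)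
        (by linarith) (by linarith)).const_mul 2)
  refine hmajorant.mono' (hcont.aestronglyMeasurable measurableSet_Ioi) ?_
  filter_upwards [ae_restrict_mem measurableSet_Ioi] with t ht
  replace ht : 0 < t := ht
  rw [Real.norm_eq_abs, abs_of_nonneg (by positivity)]
  calc t ^ r * (t ^ 2 + 1) ^ (-r) * |Real.log t| / t
      = t ^ (r - 1) * (t ^ 2 + 1) ^ (-r) * |Real.log t| := by
        rw [Real.rpow_sub_one ht.ne']; ring
    _ ≤ t ^ (r - 1) * (t ^ 2 + 1) ^ (-r) * (2 * (t ^ (1 / 2 : ℝ) + t ^ (-(1 / 2) : ℝ))) := by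
        gcongr; exact abs_log_le_two_mul_rpow_add ht
    _ = 2 * (t ^ (r - 1 / 2) * (t ^ 2 + 1) ^ (-r)) +
          2 * (t ^ (r - 3 / 2) * (t ^ 2 + 1) ^ (-r)) := by
        rw [show r - 1 / 2 = (r - 1) + 1 / 2 by ring, show r - 3 / 2 = (r - 1) + -(1 / 2) by ring,
          Real.rpow_add ht, Real.rpow_add ht]
        ring

lemma norm_ofReal_add_ofReal_mul_I_zpow_neg (x y : ℝ) (k : ℤ) :
    ‖((x : ℂ) + y * I) ^ (-k)‖ = (x ^ 2 + y ^ 2) ^ (-((k : ℝ) / 2)) := by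
  rw [norm_zpow, norm_add_mul_I, Real.sqrt_eq_rpow, ← Real.rpow_intCast,
    ← Real.rpow_mul (by positivity)]
  push_cast
  ring_nf

lemma abs_two_mul_mul_add_one_mul_le (b t : ℝ) (ht : 0 ≤ t) :
    |2 * b * (b + 1)| * t ≤ ((1 + b) * t) ^ 2 + b ^ 2 := by
  have := two_mul_le_add_sq (|(1 + b) * t|) |b|
  rw [sq_abs, sq_abs] at this
  calc |2 * b * (b + 1)| * t = 2 * |(1 + b) * t| * |b| := by
        rw [abs_mul, abs_mul, abs_mul, abs_two, abs_of_nonneg ht, add_comm b]; ring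
    _ ≤ _ := this

lemma norm_Wplus_integrand_le {k : ℤ} (hk : 0 ≤ k) {b t : ℝ} (hb : b ≠ 0) (hb₁ : b + 1 ≠ 0)
    (ht : 0 < t) :
    ‖I ^ k * (1 + (b : ℂ)) ^ (-k) * (((t : ℂ) + I) ^ (-k) *
        ((t : ℂ) + b * I / (b + 1)) ^ (-k) * (t : ℂ) ^ (k - 1) * (Real.log t : ℂ))‖ ≤
      |2 * b * (b + 1)| ^ (-((k : ℝ) / 2)) *
        (t ^ ((k : ℝ) / 2) * (t ^ 2 + 1) ^ (-((k : ℝ) / 2)) * |Real.log t| / t) := by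
  set r : ℝ := (k : ℝ) / 2
  have hr : 0 ≤ r := by positivity
  have hM : 0 < |2 * b * (b + 1)| := abs_pos.2 (by simp [hb, hb₁])
  have hcombine : (1 + (b : ℂ)) ^ (-k) * ((t : ℂ) + b * I / (b + 1)) ^ (-k) =
      (((1 + b) * t : ℝ) + (b : ℂ) * I) ^ (-k) := by
    have : (b : ℂ) + 1 ≠ 0 := by exact_mod_cast hb₁
    rw [← mul_zpow]
    congr 1
    push_cast
    field_simp
    ring
  have hpow : ‖(t : ℂ) ^ (k - 1)‖ = t ^ (2 * r - 1) := by
    rw [norm_zpow, norm_real, Real.norm_eq_abs, abs_of_pos ht, ← Real.rpow_intCast]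
    congr 1
    simp only [r]
    push_cast
    ring
  have hamgm : (((1 + b) * t) ^ 2 + b ^ 2) ^ (-r) ≤ (|2 * b * (b + 1)| * t) ^ (-r) :=
    Real.rpow_le_rpow_of_nonpos (by positivity) (abs_two_mul_mul_add_one_mul_le b t ht.le)
      (by linarith)
  calc _ = (t ^ 2 + 1) ^ (-r) * (((1 + b) * t) ^ 2 + b ^ 2) ^ (-r) * t ^ (2 * r - 1)
        * |Real.log t| := by
        have hI : ‖((t : ℂ) + I) ^ (-k)‖ = (t ^ 2 + 1) ^ (-r) := by
          simpa using norm_ofReal_add_ofReal_mul_I_zpow_neg t 1 k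
        rw [← norm_ofReal_add_ofReal_mul_I_zpow_neg, ← hcombine, ← hI, ← hpow]
        simp only [norm_mul, norm_zpow, norm_I, one_zpow, one_mul, norm_real, Real.norm_eq_abs]
        ring
    _ ≤ (t ^ 2 + 1) ^ (-r) * (|2 * b * (b + 1)| * t) ^ (-r) * t ^ (2 * r - 1)
        * |Real.log t| := by gcongr
    _ = |2 * b * (b + 1)| ^ (-r) * (t ^ r * (t ^ 2 + 1) ^ (-r) * |Real.log t| / t) := by
        rw [Real.mul_rpow hM.le ht.le, Real.rpow_sub_one ht.ne', Real.rpow_neg ht.le,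
          show 2 * r = r + r by ring, Real.rpow_add ht]
        field_simp

theorem statement18 (l : ℤ) (hleven : Even l) (hl : 4 < l) :
    IntegrableOn
      (fun t : ℝ => t ^ ((l : ℝ) / 4) * (t ^ 2 + 1) ^ (-(l : ℝ) / 4) * |Real.log t| / t)
      (Set.Ioi (0 : ℝ)) volume ∧
    ∀ b : ℝ, b ≠ 0 → b ≠ -1 →
      ‖Wplus l b‖ ≤
        |2 * b * (b + 1)| ^ (-(l : ℝ) / 4) *
          ∫ t in Set.Ioi (0 : ℝ),
            t ^ ((l : ℝ) / 4) * (t ^ 2 + 1) ^ (-(l : ℝ) / 4) * |Real.log t| / t := by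
  obtain ⟨k, rfl⟩ := hleven.two_dvd
  have hk : 2 * k / 2 = k := by omega
  have hr : ((2 * k : ℤ) : ℝ) / 4 = (k : ℝ) / 2 := by push_cast; ring
  have hk₁ : (1 : ℝ) < k := by exact_mod_cast (show 1 < k by omega)
  simp only [Wplus, hk, neg_div, hr]
  have hint := integrableOn_Ioi_rpow_mul_sq_add_one_rpow_neg_mul_abs_log_div
    (r := (k : ℝ) / 2) (by linarith)
  refine ⟨hint, fun b hb hb₁ => ?_⟩
  rw [← integral_const_mul, ← integral_const_mul]
  refine norm_integral_le_of_norm_le (hint.const_mul _) ?_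
  filter_upwards [ae_restrict_mem measurableSet_Ioi] with t ht
  exact norm_Wplus_integrand_le (by omega) hb (fun h => hb₁ (by linarith)) ht

end Stmt18
end

section
/- Let k be an even integer greater than 2 and let ε : ℝ^× → {±1} be either the trivial character or the sign character. For b ∈ ℝ∖{0,−1} define J^ε(k;b) = ∫_{ℝ^×} ((1+it)/√(t²+1))^k · (1 + i(b·t^{−1} + t(b+1)))^{−k/2} · ε(t) dt/|t|. Then for every δ > 0 there is a constant C (depending only on δ and k) such that |b(b+1)|^δ · |J^ε(k;b)| ≤ C·(1+|b|)^{−k/2+2δ} for all b ∈ ℝ∖{0,−1}. -/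
/-!
The first factor of the integrand has modulus one and `|ε t| = 1` for `t ≠ 0`, so with
`u = b/t + (b+1)t` and `q = k/4` it suffices to bound `∫ (1 + u²)^(-q) dt/|t|`. Since
`(b+1) - b = 1`, one has `1 + u² = A + (b/t)² + ((b+1)t)²` with `A = b² + (b+1)²`, hence for
`0 < s ≤ q`
  `(1 + u²)^(-q) ≤ A^(s-q) · min (|b/t|^(-2s)) (|(b+1)t|^(-2s))`,
and splitting `ℝ^×` at `t = ±√(|b|/|b+1|)` bounds the integral of the right side against
`dt/|t|` by `(2/s) A^(s-q) |b(b+1)|^(-s)`. With `s = min δ q`, the estimates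
`|b(b+1)| ≤ A` and `(1+|b|)²/8 ≤ A ≤ 8(1+|b|)²` give the claim.
-/

open Complex MeasureTheory

namespace Stmt19

/-- `J^ε(k;b)`, the integral over `ℝ^× = ℝ∖{0}` with respect to `dt/|t|`. -/
noncomputable def J (k : ℤ) (ε : ℝ → ℝ) (b : ℝ) : ℂ :=
  ∫ t in {t : ℝ | t ≠ 0},
    (((1 : ℂ) + (t : ℂ) * I) / (Real.sqrt (t ^ 2 + 1) : ℂ)) ^ k *
      ((1 : ℂ) + I * ((b : ℂ) * (t : ℂ)⁻¹ + (t : ℂ) * ((b : ℂ) + 1))) ^ (-(k / 2)) *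
      (ε t : ℂ) / (|t| : ℝ)

open Set Real
open scoped ENNReal

lemma rpow_neg_add_le_rpow_mul_rpow {x y q s : ℝ} (hx : 0 < x) (hy : 0 < y) (hs : 0 ≤ s)
    (hsq : s ≤ q) : (x + y) ^ (-q) ≤ x ^ (s - q) * y ^ (-s) := by
  have hxy : 0 < x + y := add_pos hx hy
  calc (x + y) ^ (-q) = (x + y) ^ (s - q) * (x + y) ^ (-s) := by
        rw [← rpow_add hxy]; ring_nf
    _ ≤ x ^ (s - q) * y ^ (-s) := by
        gcongr ?_ * ?_
        · exact rpow_le_rpow_of_nonpos hx (by linarith) (by linarith)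
        · exact rpow_le_rpow_of_nonpos hy (by linarith) (by linarith)

lemma rpow_neg_add_le_min {x y s : ℝ} (hx : 0 < x) (hy : 0 < y) (hs : 0 ≤ s) :
    (x + y) ^ (-s) ≤ min (x ^ (-s)) (y ^ (-s)) :=
  le_min (rpow_le_rpow_of_nonpos hx (by linarith) (by linarith))
    (rpow_le_rpow_of_nonpos hy (by linarith) (by linarith))

lemma sq_rpow_neg (x s : ℝ) : (x ^ 2) ^ (-s) = |x| ^ (-(2 * s)) := by
  rw [← sq_abs, ← rpow_natCast, ← rpow_mul (abs_nonneg x)]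
  norm_num

lemma rpow_neg_two_mul_mul_sqrt_div_rpow {x y : ℝ} (hx : 0 < x) (hy : 0 < y) (s : ℝ) :
    x ^ (-(2 * s)) * √(x / y) ^ (2 * s) = (x * y) ^ (-s) := by
  rw [sqrt_eq_rpow, ← rpow_mul (div_pos hx hy).le, div_rpow hx.le hy.le, mul_div_assoc',
    ← rpow_add hx, mul_rpow hx.le hy.le, rpow_neg hy.le]
  ring_nf

lemma rpow_le_rpow_abs_mul_rpow_of_div_le_of_le_mul {x y c : ℝ} (hx : 0 < x) (hc : 1 ≤ c)
    (hlo : x / c ≤ y) (hhi : y ≤ c * x) (r : ℝ) : y ^ r ≤ c ^ |r| * x ^ r := by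
  have hc0 : 0 < c := by linarith
  have hy : 0 < y := (div_pos hx hc0).trans_le hlo
  rcases le_or_gt 0 r with hr | hr
  · calc y ^ r ≤ (c * x) ^ r := rpow_le_rpow hy.le hhi hr
      _ = c ^ |r| * x ^ r := by rw [mul_rpow hc0.le hx.le, abs_of_nonneg hr]
  · calc y ^ r ≤ (x / c) ^ r := rpow_le_rpow_of_nonpos (div_pos hx hc0) hlo hr.le
      _ = c ^ |r| * x ^ r := by
        rw [div_rpow hx.le hc0.le, abs_of_neg hr, rpow_neg hc0.le]; ring

lemma abs_mul_add_one_le (b : ℝ) : |b * (b + 1)| ≤ b ^ 2 + (b + 1) ^ 2 := by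
  rw [abs_le]; constructor <;> nlinarith [sq_nonneg (2 * b + 1)]

lemma one_add_abs_sq_div_le (b : ℝ) : (1 + |b|) ^ 2 / 8 ≤ b ^ 2 + (b + 1) ^ 2 := by
  rcases abs_cases b with ⟨h, -⟩ | ⟨h, -⟩ <;> rw [h] <;> nlinarith [sq_nonneg (5 * b + 3)]

lemma le_mul_one_add_abs_sq (b : ℝ) : b ^ 2 + (b + 1) ^ 2 ≤ 8 * (1 + |b|) ^ 2 := by
  rcases abs_cases b with ⟨h, hb⟩ | ⟨h, hb⟩ <;> rw [h] <;> nlinarith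

lemma abs_mul_add_one_rpow_mul_le {b x δ s q : ℝ} (hb : b ≠ 0) (hc : b + 1 ≠ 0) (hs : 0 < s)
    (hsδ : s ≤ δ) (hx : x ≤ 2 / s * (b ^ 2 + (b + 1) ^ 2) ^ (s - q) * |b * (b + 1)| ^ (-s)) :
    |b * (b + 1)| ^ δ * x ≤ 2 / s * 8 ^ |δ - q| * (1 + |b|) ^ (2 * (δ - q)) := by
  set A := b ^ 2 + (b + 1) ^ 2
  have hA : 0 < A := by positivity
  have hbc : 0 < |b * (b + 1)| := abs_pos.2 (mul_ne_zero hb hc)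
  calc |b * (b + 1)| ^ δ * x
      ≤ |b * (b + 1)| ^ δ * (2 / s * A ^ (s - q) * |b * (b + 1)| ^ (-s)) := by gcongr
    _ = 2 / s * A ^ (s - q) * |b * (b + 1)| ^ (δ - s) := by
        rw [sub_eq_add_neg δ, rpow_add hbc]; ring
    _ ≤ 2 / s * A ^ (s - q) * A ^ (δ - s) := by
        gcongr
        exact abs_mul_add_one_le b
    _ = 2 / s * A ^ (δ - q) := by rw [mul_assoc, ← rpow_add hA]; ring_nf
    _ ≤ 2 / s * (8 ^ |δ - q| * ((1 + |b|) ^ 2) ^ (δ - q)) := by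
        gcongr
        exact rpow_le_rpow_abs_mul_rpow_of_div_le_of_le_mul (by positivity) (by norm_num)
          (one_add_abs_sq_div_le b) (le_mul_one_add_abs_sq b) _
    _ = 2 / s * 8 ^ |δ - q| * (1 + |b|) ^ (2 * (δ - q)) := by
        rw [← rpow_natCast, ← rpow_mul (by positivity), ← mul_assoc]
        norm_num

lemma norm_one_add_mul_I_zpow (x : ℝ) (n : ℤ) :
    ‖(1 + x * I) ^ n‖ = (1 + x ^ 2) ^ ((n : ℝ) / 2) := by
  rw [norm_zpow, show (1 : ℂ) = ((1 : ℝ) : ℂ) by simp, norm_add_mul_I, one_pow,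
    sqrt_eq_rpow, ← rpow_intCast, ← rpow_mul (by positivity)]
  ring_nf

lemma norm_one_add_mul_I_div_sqrt (t : ℝ) : ‖(1 + t * I) / (√(t ^ 2 + 1) : ℂ)‖ = 1 := by
  have h := norm_one_add_mul_I_zpow t 1
  rw [zpow_one, Int.cast_one, ← sqrt_eq_rpow, add_comm (1 : ℝ)] at h
  rw [norm_div, h, norm_real, norm_of_nonneg (sqrt_nonneg _),
    div_self (sqrt_pos.2 (by positivity)).ne']

lemma setLIntegral_ne_zero_comp_abs_le (f : ℝ → ℝ≥0∞) :
    ∫⁻ x in {x : ℝ | x ≠ 0}, f |x| ≤ 2 * ∫⁻ x in Ioi 0, f x := by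
  have hpos : ∫⁻ x in Ioi 0, f |x| = ∫⁻ x in Ioi 0, f x :=
    setLIntegral_congr_fun measurableSet_Ioi fun x hx => by rw [abs_of_pos hx]
  have hneg : ∫⁻ x in Iio 0, f |x| = ∫⁻ x in Ioi 0, f x := by
    rw [← hpos, ← (Measure.measurePreserving_neg volume).setLIntegral_comp_preimage_emb
      measurableEmbedding_neg]
    simp
  calc ∫⁻ x in {x : ℝ | x ≠ 0}, f |x| = ∫⁻ x in Iio 0 ∪ Ioi 0, f |x| := by
        congr; ext x; exact ne_iff_lt_or_gt
    _ ≤ _ := lintegral_union_le _ _ _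
    _ = 2 * ∫⁻ x in Ioi 0, f x := by rw [hneg, hpos, two_mul]

lemma lintegral_Ioc_rpow {τ p : ℝ} (hτ : 0 < τ) (hp : -1 < p) :
    ∫⁻ r in Ioc 0 τ, ENNReal.ofReal (r ^ p) = ENNReal.ofReal (τ ^ (p + 1) / (p + 1)) := by
  rw [← ofReal_integral_eq_lintegral_ofReal (intervalIntegral.intervalIntegrable_rpow' hp).1
    ((ae_restrict_iff' measurableSet_Ioc).2 (.of_forall fun r hr => rpow_nonneg hr.1.le p)),
    ← intervalIntegral.integral_of_le hτ.le, integral_rpow (.inl hp), zero_rpow (by linarith),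
    sub_zero]

lemma lintegral_Ioi_rpow {τ p : ℝ} (hτ : 0 < τ) (hp : p < -1) :
    ∫⁻ r in Ioi τ, ENNReal.ofReal (r ^ p) = ENNReal.ofReal (-τ ^ (p + 1) / (p + 1)) := by
  rw [← ofReal_integral_eq_lintegral_ofReal (integrableOn_Ioi_rpow_of_lt hp hτ)
    ((ae_restrict_iff' measurableSet_Ioi).2
      (.of_forall fun r hr => rpow_nonneg (hτ.trans hr).le p)),
    integral_Ioi_rpow_of_lt hp hτ]

lemma lintegral_Ioi_min_rpow_div_le {α β p τ : ℝ} (hα : 0 ≤ α) (hβ : 0 ≤ β) (hp : 0 < p)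
    (hτ : 0 < τ) :
    ∫⁻ r in Ioi 0, ENNReal.ofReal (min (α * r ^ p) (β * r ^ (-p)) / r) ≤
      ENNReal.ofReal ((α * τ ^ p + β * τ ^ (-p)) / p) := by
  have hsmall : ∫⁻ r in Ioc 0 τ, ENNReal.ofReal (min (α * r ^ p) (β * r ^ (-p)) / r) ≤
      ENNReal.ofReal (α * τ ^ p / p) := by
    calc _ ≤ ∫⁻ r in Ioc 0 τ, ENNReal.ofReal α * ENNReal.ofReal (r ^ (p - 1)) := by
          refine setLIntegral_mono' measurableSet_Ioc fun r hr => ?_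
          rw [← ENNReal.ofReal_mul hα, rpow_sub_one hr.1.ne', ← mul_div_assoc]
          exact ENNReal.ofReal_le_ofReal (div_le_div_of_nonneg_right (min_le_left _ _) hr.1.le)
      _ = ENNReal.ofReal (α * τ ^ p / p) := by
          rw [lintegral_const_mul' _ _ ENNReal.ofReal_ne_top, lintegral_Ioc_rpow hτ (by linarith),
            ← ENNReal.ofReal_mul hα, sub_add_cancel, mul_div_assoc]
  have hlarge : ∫⁻ r in Ioi τ, ENNReal.ofReal (min (α * r ^ p) (β * r ^ (-p)) / r) ≤
      ENNReal.ofReal (β * τ ^ (-p) / p) := by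
    calc _ ≤ ∫⁻ r in Ioi τ, ENNReal.ofReal β * ENNReal.ofReal (r ^ (-p - 1)) := by
          refine setLIntegral_mono' measurableSet_Ioi fun r hr => ?_
          rw [← ENNReal.ofReal_mul hβ, rpow_sub_one (hτ.trans hr).ne', ← mul_div_assoc]
          exact ENNReal.ofReal_le_ofReal
            (div_le_div_of_nonneg_right (min_le_right _ _) (hτ.trans hr).le)
      _ = ENNReal.ofReal (β * τ ^ (-p) / p) := by
          rw [lintegral_const_mul' _ _ ENNReal.ofReal_ne_top, lintegral_Ioi_rpow hτ (by linarith),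
            ← ENNReal.ofReal_mul hβ, sub_add_cancel, neg_div_neg_eq, mul_div_assoc]
  calc _ = ∫⁻ r in Ioc 0 τ ∪ Ioi τ, ENNReal.ofReal (min (α * r ^ p) (β * r ^ (-p)) / r) := by
        rw [Ioc_union_Ioi_eq_Ioi hτ.le]
    _ ≤ _ := lintegral_union_le _ _ _
    _ ≤ ENNReal.ofReal (α * τ ^ p / p) + ENNReal.ofReal (β * τ ^ (-p) / p) :=
        add_le_add hsmall hlarge
    _ = _ := by
        rw [← ENNReal.ofReal_add (by positivity) (by positivity), add_div]

noncomputable def Jintegrand (k : ℤ) (ε : ℝ → ℝ) (b t : ℝ) : ℂ :=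
  (((1 : ℂ) + (t : ℂ) * I) / (Real.sqrt (t ^ 2 + 1) : ℂ)) ^ k *
    ((1 : ℂ) + I * ((b : ℂ) * (t : ℂ)⁻¹ + (t : ℂ) * ((b : ℂ) + 1))) ^ (-(k / 2)) *
    (ε t : ℂ) / (|t| : ℝ)

lemma norm_Jintegrand {k : ℤ} {ε : ℝ → ℝ} {b t : ℝ} (hε : |ε t| = 1) :
    ‖Jintegrand k ε b t‖ =
      (1 + (b * t⁻¹ + t * (b + 1)) ^ 2) ^ (-((k / 2 : ℤ) : ℝ) / 2) / |t| := by
  have hu : (1 : ℂ) + I * (b * (t : ℂ)⁻¹ + t * (b + 1)) =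
      1 + ((b * t⁻¹ + t * (b + 1) : ℝ) : ℂ) * I := by
    push_cast; ring
  rw [Jintegrand, hu, norm_div, norm_mul, norm_mul, norm_zpow, norm_one_add_mul_I_div_sqrt,
    one_zpow, one_mul, norm_one_add_mul_I_zpow, norm_real, norm_real, norm_eq_abs, hε, mul_one,
    norm_eq_abs, abs_abs]
  push_cast
  ring_nf

lemma norm_Jintegrand_le {k : ℤ} {ε : ℝ → ℝ} {b t s : ℝ} (hε : |ε t| = 1) (hb : b ≠ 0)
    (hc : b + 1 ≠ 0) (ht : t ≠ 0) (hs : 0 < s) (hsq : s ≤ ((k / 2 : ℤ) : ℝ) / 2) :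
    ‖Jintegrand k ε b t‖ ≤ (b ^ 2 + (b + 1) ^ 2) ^ (s - ((k / 2 : ℤ) : ℝ) / 2) *
      (min (|b| ^ (-(2 * s)) * |t| ^ (2 * s)) (|b + 1| ^ (-(2 * s)) * |t| ^ (-(2 * s))) / |t|) := by
  set q : ℝ := ((k / 2 : ℤ) : ℝ) / 2
  have hsplit : 1 + (b * t⁻¹ + t * (b + 1)) ^ 2 =
      (b ^ 2 + (b + 1) ^ 2) + ((b * t⁻¹) ^ 2 + ((b + 1) * t) ^ 2) := by
    field_simp; ring
  have hX : 0 < (b * t⁻¹) ^ 2 := by positivity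
  have hY : 0 < ((b + 1) * t) ^ 2 := by positivity
  rw [norm_Jintegrand hε, neg_div, hsplit, mul_div_assoc']
  gcongr
  calc (b ^ 2 + (b + 1) ^ 2 + ((b * t⁻¹) ^ 2 + ((b + 1) * t) ^ 2)) ^ (-q)
      ≤ (b ^ 2 + (b + 1) ^ 2) ^ (s - q) * ((b * t⁻¹) ^ 2 + ((b + 1) * t) ^ 2) ^ (-s) :=
        rpow_neg_add_le_rpow_mul_rpow (by positivity) (by positivity) hs.le hsq
    _ ≤ (b ^ 2 + (b + 1) ^ 2) ^ (s - q) *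
          min (((b * t⁻¹) ^ 2) ^ (-s)) ((((b + 1) * t) ^ 2) ^ (-s)) := by
        gcongr; exact rpow_neg_add_le_min hX hY hs.le
    _ = _ := by
        rw [sq_rpow_neg, sq_rpow_neg, abs_mul, abs_mul, abs_inv, mul_rpow (abs_nonneg _)
          (inv_nonneg.2 (abs_nonneg _)), mul_rpow (abs_nonneg _) (abs_nonneg _),
          inv_rpow (abs_nonneg _), ← rpow_neg (abs_nonneg _), neg_neg]

theorem norm_J_le {k : ℤ} {ε : ℝ → ℝ} {b s : ℝ} (hε : ∀ t : ℝ, t ≠ 0 → |ε t| = 1) (hb : b ≠ 0)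
    (hc : b + 1 ≠ 0) (hs : 0 < s) (hsq : s ≤ ((k / 2 : ℤ) : ℝ) / 2) :
    ‖J k ε b‖ ≤ 2 / s * (b ^ 2 + (b + 1) ^ 2) ^ (s - ((k / 2 : ℤ) : ℝ) / 2) *
      |b * (b + 1)| ^ (-s) := by
  set K := (b ^ 2 + (b + 1) ^ 2) ^ (s - ((k / 2 : ℤ) : ℝ) / 2)
  set α := |b| ^ (-(2 * s))
  set β := |b + 1| ^ (-(2 * s))
  set g : ℝ → ℝ≥0∞ := fun r => ENNReal.ofReal (min (α * r ^ (2 * s)) (β * r ^ (-(2 * s))) / r)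
  have hb' : 0 < |b| := abs_pos.2 hb
  have hc' : 0 < |b + 1| := abs_pos.2 hc
  set τ := √(|b| / |b + 1|)
  have hατ : α * τ ^ (2 * s) = |b * (b + 1)| ^ (-s) := by
    rw [abs_mul, rpow_neg_two_mul_mul_sqrt_div_rpow hb' hc']
  have hβτ : β * τ ^ (-(2 * s)) = |b * (b + 1)| ^ (-s) := by
    rw [rpow_neg (sqrt_nonneg _), ← inv_rpow (sqrt_nonneg _), ← sqrt_inv, inv_div,
      abs_mul, mul_comm |b|, rpow_neg_two_mul_mul_sqrt_div_rpow hc' hb']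
  have hpt : ∀ t ∈ {t : ℝ | t ≠ 0},
      ENNReal.ofReal ‖Jintegrand k ε b t‖ ≤ ENNReal.ofReal K * g |t| := fun t ht => by
    rw [← ENNReal.ofReal_mul (by positivity)]
    exact ENNReal.ofReal_le_ofReal (norm_Jintegrand_le (hε t ht) hb hc ht hs hsq)
  have hlint : ∫⁻ t in {t : ℝ | t ≠ 0}, ENNReal.ofReal ‖Jintegrand k ε b t‖ ≤
      ENNReal.ofReal (2 / s * K * |b * (b + 1)| ^ (-s)) :=
    calc _ ≤ ∫⁻ t in {t : ℝ | t ≠ 0}, ENNReal.ofReal K * g |t| :=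
          setLIntegral_mono' (measurableSet_singleton 0).compl hpt
      _ = ENNReal.ofReal K * ∫⁻ t in {t : ℝ | t ≠ 0}, g |t| :=
          lintegral_const_mul' _ _ ENNReal.ofReal_ne_top
      _ ≤ ENNReal.ofReal K *
            (2 * ENNReal.ofReal ((α * τ ^ (2 * s) + β * τ ^ (-(2 * s))) / (2 * s))) := by
          gcongr
          exact (setLIntegral_ne_zero_comp_abs_le g).trans (by
            gcongr
            exact lintegral_Ioi_min_rpow_div_le (by positivity) (by positivity) (by positivity)
              (sqrt_pos.2 (div_pos hb' hc')))
      _ = ENNReal.ofReal (2 / s * K * |b * (b + 1)| ^ (-s)) := by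
          rw [hατ, hβτ, ← ENNReal.ofReal_ofNat 2, ← ENNReal.ofReal_mul (by positivity),
            ← ENNReal.ofReal_mul (by positivity)]
          congr 1
          field_simp
          ring
  exact (norm_integral_le_lintegral_norm _).trans
    (ENNReal.toReal_le_of_le_ofReal (by positivity) hlint)

theorem statement19 (k : ℤ) (hkeven : Even k) (hk : 2 < k)
    (ε : ℝ → ℝ)
    (hε : (∀ t : ℝ, ε t = 1) ∨ (∀ t : ℝ, t ≠ 0 → ε t = if t < 0 then -1 else 1))
    (δ : ℝ) (hδ : 0 < δ) :
    ∃ C : ℝ, ∀ b : ℝ, b ≠ 0 → b ≠ -1 →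
      |b * (b + 1)| ^ δ * ‖J k ε b‖ ≤
        C * (1 + |b|) ^ (-(k : ℝ) / 2 + 2 * δ) := by
  obtain ⟨m, rfl⟩ := hkeven
  have hm : (m + m) / 2 = m := by omega
  have hε1 : ∀ t : ℝ, t ≠ 0 → |ε t| = 1 := fun t ht => by
    rcases hε with h | h
    · simp [h t]
    · rw [h t ht]; split_ifs <;> simp
  set q : ℝ := (m : ℝ) / 2 with hq_def
  have hq : 0 < q := by
    have : (0 : ℝ) < m := by exact_mod_cast (by omega : 0 < m)
    positivity
  set s := min δ q
  have hs : 0 < s := lt_min hδ hq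
  refine ⟨2 / s * 8 ^ |δ - q|, fun b hb hb1 => ?_⟩
  have hc : b + 1 ≠ 0 := fun h => hb1 (by linarith)
  have hJ := norm_J_le hε1 hb hc hs (k := m + m) (by rw [hm]; exact min_le_right _ _)
  rw [hm] at hJ
  have hexp : -((m + m : ℤ) : ℝ) / 2 + 2 * δ = 2 * (δ - q) := by rw [hq_def]; push_cast; ring
  rw [hexp]
  exact abs_mul_add_one_rpow_mul_le hb hc hs (min_le_left _ _) hJ

end Stmt19
end
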